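/- For every γ ∈ [0,1), the amplitude-damped Bell state ρ' itself is entangled: ρ' cannot be written as a finite sum Σᵢ Aᵢ ⊗ Bᵢ of Kronecker products of positive semidefinite 2×2 complex matrices Aᵢ, Bᵢ. -/

import Mathlib

open Matrix Kronecker ComplexOrder

/-- Amplitude-damping Kraus operator E₀ = [[1,0],[0,√(1−γ)]]. -/
noncomputable def E0 (γ : ℝ) : Matrix (Fin 2) (Fin 2) ℂ :=
  !![1, 0; 0, (Real.sqrt (1 - γ) : ℂ)]

/-- Amplitude-damping Kraus operator E₁ = [[0,√γ],[0,0]]. -/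
noncomputable def E1 (γ : ℝ) : Matrix (Fin 2) (Fin 2) ℂ :=
  !![0, (Real.sqrt γ : ℂ); 0, 0]

/-- The Bell state vector |Φ⁺⟩ = (|00⟩ + |11⟩)/√2, indexed by pairs (a,b) ∈ {0,1}². -/
noncomputable def phi : (Fin 2 × Fin 2) → ℂ :=
  fun p => if p.1 = p.2 then ((1 / Real.sqrt 2 : ℝ) : ℂ) else 0

/-- The Bell density matrix ρ = |Φ⁺⟩⟨Φ⁺|. -/
noncomputable def ρBell : Matrix (Fin 2 × Fin 2) (Fin 2 × Fin 2) ℂ :=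
  Matrix.vecMulVec phi (star phi)

/-- The family of amplitude-damping Kraus operators. -/
noncomputable def Ekraus (γ : ℝ) : Fin 2 → Matrix (Fin 2) (Fin 2) ℂ := ![E0 γ, E1 γ]

/-- The amplitude-damped Bell state
ρ' = Σ_{j,k} (E_j ⊗ E_k) ρ (E_j ⊗ E_k)†. -/
noncomputable def ρ' (γ : ℝ) : Matrix (Fin 2 × Fin 2) (Fin 2 × Fin 2) ℂ :=
  ∑ j : Fin 2, ∑ k : Fin 2,
    (Ekraus γ j ⊗ₖ Ekraus γ k) * ρBell * (Ekraus γ j ⊗ₖ Ekraus γ k)ᴴ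

lemma rho'_entry_C (γ : ℝ) (h1 : γ ≤ 1) :
    ρ' γ (0,0) (1,1) = ((1-γ)/2 : ℝ) := by
  have hs2 : Real.sqrt 2 * Real.sqrt 2 = 2 := Real.mul_self_sqrt (by norm_num)
  have hs1g : Real.sqrt (1-γ) * Real.sqrt (1-γ) = 1-γ := Real.mul_self_sqrt (by linarith)
  simp [ρ', Ekraus, E0, E1, ρBell, phi, Matrix.mul_apply, Matrix.vecMulVec_apply,
    Fintype.sum_prod_type, Fin.sum_univ_two, Matrix.conjTranspose_apply, Prod.ext_iff]
  norm_cast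
  rw [hs1g, show ((√2)⁻¹*(√2)⁻¹ : ℝ) = ((√2*√2 : ℝ))⁻¹ by ring, hs2]
  push_cast
  ring

lemma rho'_entry_S1 (γ : ℝ) (h0 : 0 ≤ γ) (h1 : γ ≤ 1) :
    ρ' γ (0,1) (0,1) = ((γ*(1-γ))/2 : ℝ) := by
  have hs2 : Real.sqrt 2 * Real.sqrt 2 = 2 := Real.mul_self_sqrt (by norm_num)
  have hsg : Real.sqrt γ * Real.sqrt γ = γ := Real.mul_self_sqrt h0
  have hs1g : Real.sqrt (1-γ) * Real.sqrt (1-γ) = 1-γ := Real.mul_self_sqrt (by linarith)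
  simp [ρ', Ekraus, E0, E1, ρBell, phi, Matrix.mul_apply, Matrix.vecMulVec_apply,
    Fintype.sum_prod_type, Fin.sum_univ_two, Matrix.conjTranspose_apply, Prod.ext_iff]
  norm_cast
  rw [show ((√2)⁻¹*(√2)⁻¹ : ℝ) = ((√2*√2 : ℝ))⁻¹ by ring, hs2]
  rw [show √γ * √(1-γ) * 2⁻¹ * (√γ * √(1-γ)) = (√γ*√γ)*(√(1-γ)*√(1-γ))/2 by ring, hsg, hs1g]
  push_cast
  ring

lemma rho'_entry_S2 (γ : ℝ) (h0 : 0 ≤ γ) (h1 : γ ≤ 1) :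
    ρ' γ (1,0) (1,0) = ((γ*(1-γ))/2 : ℝ) := by
  have hs2 : Real.sqrt 2 * Real.sqrt 2 = 2 := Real.mul_self_sqrt (by norm_num)
  have hsg : Real.sqrt γ * Real.sqrt γ = γ := Real.mul_self_sqrt h0
  have hs1g : Real.sqrt (1-γ) * Real.sqrt (1-γ) = 1-γ := Real.mul_self_sqrt (by linarith)
  simp [ρ', Ekraus, E0, E1, ρBell, phi, Matrix.mul_apply, Matrix.vecMulVec_apply,
    Fintype.sum_prod_type, Fin.sum_univ_two, Matrix.conjTranspose_apply, Prod.ext_iff]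
  norm_cast
  rw [show ((√2)⁻¹*(√2)⁻¹ : ℝ) = ((√2*√2 : ℝ))⁻¹ by ring, hs2]
  rw [show √(1-γ) * √γ * 2⁻¹ * (√(1-γ) * √γ) = (√γ*√γ)*(√(1-γ)*√(1-γ))/2 by ring, hsg, hs1g]
  push_cast
  ring

/-- Basic entrywise facts about a 2×2 complex PSD matrix. -/
lemma psd_facts (M : Matrix (Fin 2) (Fin 2) ℂ) (h : M.PosSemidef) :
    0 ≤ (M 0 0).re ∧ 0 ≤ (M 1 1).re ∧ (M 0 0).im = 0 ∧ (M 1 1).im = 0 ∧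
      Complex.normSq (M 0 1) ≤ (M 0 0).re * (M 1 1).re := by
  have quad : ∀ x : Fin 2 → ℂ, 0 ≤ (star x ⬝ᵥ M *ᵥ x).re := by
    intro x
    have := h.dotProduct_mulVec_nonneg x
    simpa using (Complex.le_def.mp this).1
  have h00 : (M 0 0).im = 0 := by
    have := congrArg Complex.im (h.1.apply 0 0)
    simp [Complex.star_def] at this; linarith
  have h11 : (M 1 1).im = 0 := by
    have := congrArg Complex.im (h.1.apply 1 1)
    simp [Complex.star_def] at this; linarith
  have h10 : M 1 0 = (starRingEnd ℂ) (M 0 1) := (h.1.apply 1 0).symm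
  set a := (M 0 0).re with ha_def
  set d := (M 1 1).re with hd_def
  set s := Complex.normSq (M 0 1) with hs_def
  have hs : 0 ≤ s := Complex.normSq_nonneg _
  have ha : 0 ≤ a := by
    have := quad ![1, 0]
    simpa [dotProduct, Matrix.mulVec, Fin.sum_univ_two] using this
  have hd : 0 ≤ d := by
    have := quad ![0, 1]
    simpa [dotProduct, Matrix.mulVec, Fin.sum_univ_two] using this
  refine ⟨ha, hd, h00, h11, ?_⟩
  have key : ∀ t : ℝ, 0 ≤ a*s - 2*s*t + d*t^2 := by
    intro t
    have hq := quad ![M 0 1, ((-t : ℝ) : ℂ)]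
    simp only [hs_def, Complex.normSq_apply]
    simp [dotProduct, Matrix.mulVec, Fin.sum_univ_two, Complex.add_re,
      Complex.mul_re, h10, h00, h11] at hq
    nlinarith [hq]
  have k1 : 0 ≤ d*(a*d - s) := by
    have hq := quad ![((d:ℝ):ℂ), -star (M 0 1)]
    simp only [hs_def, Complex.normSq_apply]
    simp [dotProduct, Matrix.mulVec, Fin.sum_univ_two, Complex.add_re,
      Complex.mul_re, h10, h00, h11, hd_def] at hq
    nlinarith [hq]
  rcases eq_or_lt_of_le hd with hd0 | hd0
  · have := key (a+1)
    have has : 0 ≤ a*s := mul_nonneg ha hs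
    nlinarith [this, has, hd0]
  · nlinarith [k1, hd0]

/-- For every γ ∈ [0,1), the amplitude-damped Bell state ρ' is entangled:
it is not a finite sum of Kronecker products of positive semidefinite
2×2 complex matrices. -/
theorem damped_bell_state_entangled (γ : ℝ) (hγ : γ ∈ Set.Ico (0:ℝ) 1) :
    ¬ ∃ (n : ℕ) (A B : Fin n → Matrix (Fin 2) (Fin 2) ℂ),
        (∀ i, (A i).PosSemidef) ∧ (∀ i, (B i).PosSemidef) ∧
        ρ' γ = ∑ i, A i ⊗ₖ B i := by
  obtain ⟨hγ0, hγ1⟩ := hγ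
  rintro ⟨n, A, B, hA, hB, hEq⟩
  -- entry equations
  have hC : ∑ i, A i 0 1 * B i 0 1 = (((1-γ)/2 : ℝ) : ℂ) := by
    have := congrFun (congrFun hEq (0,0)) (1,1)
    rw [rho'_entry_C γ hγ1.le] at this
    simpa [Matrix.sum_apply, Matrix.kroneckerMap_apply] using this.symm
  have hS1 : ∑ i, A i 0 0 * B i 1 1 = (((γ*(1-γ))/2 : ℝ) : ℂ) := by
    have := congrFun (congrFun hEq (0,1)) (0,1)
    rw [rho'_entry_S1 γ hγ0 hγ1.le] at this
    simpa [Matrix.sum_apply, Matrix.kroneckerMap_apply] using this.symm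
  have hS2 : ∑ i, A i 1 1 * B i 0 0 = (((γ*(1-γ))/2 : ℝ) : ℂ) := by
    have := congrFun (congrFun hEq (1,0)) (1,0)
    rw [rho'_entry_S2 γ hγ0 hγ1.le] at this
    simpa [Matrix.sum_apply, Matrix.kroneckerMap_apply] using this.symm
  -- real entry data
  set a : Fin n → ℝ := fun i => (A i 0 0).re with ha_def
  set a' : Fin n → ℝ := fun i => (A i 1 1).re with ha'_def
  set b : Fin n → ℝ := fun i => (B i 0 0).re with hb_def
  set b' : Fin n → ℝ := fun i => (B i 1 1).re with hb'_def
  have hAf := fun i => psd_facts (A i) (hA i)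
  have hBf := fun i => psd_facts (B i) (hB i)
  have hS1r : ∑ i, a i * b' i = (γ*(1-γ))/2 := by
    have := congrArg Complex.re hS1
    rw [Complex.re_sum] at this
    simp only [Complex.ofReal_re] at this
    rw [← this]
    refine Finset.sum_congr rfl fun i _ => ?_
    rw [Complex.mul_re, (hAf i).2.2.1, (hBf i).2.2.2.1]
    ring
  have hS2r : ∑ i, a' i * b i = (γ*(1-γ))/2 := by
    have := congrArg Complex.re hS2
    rw [Complex.re_sum] at this
    simp only [Complex.ofReal_re] at this
    rw [← this]
    refine Finset.sum_congr rfl fun i _ => ?_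
    rw [Complex.mul_re, (hAf i).2.2.2.1, (hBf i).2.2.1]
    ring
  -- norm lower bound
  have hnorm : ((1-γ)/2 : ℝ) ≤ ∑ i, ‖A i 0 1‖ * ‖B i 0 1‖ := by
    calc ((1-γ)/2 : ℝ) = ‖(((1-γ)/2 : ℝ) : ℂ)‖ := by
          rw [Complex.norm_real, Real.norm_of_nonneg (by linarith)]
      _ = ‖∑ i, A i 0 1 * B i 0 1‖ := by rw [hC]
      _ ≤ ∑ i, ‖A i 0 1 * B i 0 1‖ := norm_sum_le _ _
      _ = ∑ i, ‖A i 0 1‖ * ‖B i 0 1‖ := by simp [norm_mul]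
  -- per-index bound by sqrt
  have hper : ∀ i, ‖A i 0 1‖ * ‖B i 0 1‖ ≤ Real.sqrt ((a i * b' i) * (a' i * b i)) := by
    intro i
    have h1 : (‖A i 0 1‖ * ‖B i 0 1‖)^2 ≤ (a i * b' i) * (a' i * b i) := by
      have e1 : ‖A i 0 1‖^2 = Complex.normSq (A i 0 1) := by
        rw [Complex.sq_norm]
      have e2 : ‖B i 0 1‖^2 = Complex.normSq (B i 0 1) := by
        rw [Complex.sq_norm]
      have hA1 := (hAf i).2.2.2.2
      have hB1 := (hBf i).2.2.2.2
      have hAa := (hAf i).1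
      have hAa' := (hAf i).2.1
      have hBb := (hBf i).1
      have hBb' := (hBf i).2.1
      calc (‖A i 0 1‖ * ‖B i 0 1‖)^2
          = Complex.normSq (A i 0 1) * Complex.normSq (B i 0 1) := by
            rw [mul_pow, e1, e2]
        _ ≤ (a i * a' i) * (b i * b' i) :=
            mul_le_mul hA1 hB1 (Complex.normSq_nonneg _) (mul_nonneg hAa hAa')
        _ = (a i * b' i) * (a' i * b i) := by ring
    have := Real.sqrt_le_sqrt h1
    rwa [Real.sqrt_sq (mul_nonneg (norm_nonneg _) (norm_nonneg _))] at this
  have hsum1 : ∑ i, ‖A i 0 1‖ * ‖B i 0 1‖ ≤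
      ∑ i, Real.sqrt ((a i * b' i) * (a' i * b i)) :=
    Finset.sum_le_sum fun i _ => hper i
  -- Cauchy-Schwarz
  have hCS : (∑ i, Real.sqrt ((a i * b' i) * (a' i * b i)))^2 ≤
      (∑ i, a i * b' i) * (∑ i, a' i * b i) := by
    refine Finset.sum_sq_le_sum_mul_sum_of_sq_eq_mul _
      (fun i _ => mul_nonneg ((hAf i).1) ((hBf i).2.1))
      (fun i _ => mul_nonneg ((hAf i).2.1) ((hBf i).1))
      (fun i _ => ?_)
    exact Real.sq_sqrt (mul_nonneg
      (mul_nonneg ((hAf i).1) ((hBf i).2.1))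
      (mul_nonneg ((hAf i).2.1) ((hBf i).1)))
  rw [hS1r, hS2r] at hCS
  have hR0 : 0 ≤ ∑ i, Real.sqrt ((a i * b' i) * (a' i * b i)) :=
    Finset.sum_nonneg fun i _ => Real.sqrt_nonneg _
  have hcR : ((1-γ)/2 : ℝ) ≤ ∑ i, Real.sqrt ((a i * b' i) * (a' i * b i)) :=
    le_trans hnorm hsum1
  have hsq := mul_self_le_mul_self (by linarith : (0:ℝ) ≤ (1-γ)/2) hcR
  have hfin : ((1-γ)/2)*((1-γ)/2) ≤ (γ*(1-γ)/2)*(γ*(1-γ)/2) := by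
    nlinarith [hsq, hCS]
  have h1 : (0:ℝ) < 1 - γ := by linarith
  nlinarith [hfin, mul_pos (mul_pos h1 h1) (mul_pos h1 (show (0:ℝ) < 1 + γ by linarith))]
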